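/- Let T = t·A·B·A⁻¹ ∈ GL(2,ℝ) where t > 0, A ∈ GL(2,ℝ), and B is a rotation by angle θ with cos θ > 0. Let a ∈ ℝ² be nonzero with ‖T⁻¹(a)‖ < 1 and |sin θ| ≤ ‖T⁻¹(a)‖ / (‖A‖‖A⁻¹‖). Then T̄ₐ(x) = (a+T(x))/‖a+T(x)‖ has a fixed point on S¹. -/

import Mathlib

/-!
A unit vector `x` is fixed by `T̄ₐ` iff `a + T x = c • x` for some `c > 0`, i.e. iff
`x = (c - T)⁻¹ a` has norm `1`. If `sin θ = 0` then `T = t` and `a / ‖a‖` is fixed. Otherwise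
`T = A (t cos θ + t sin θ · J) A⁻¹`, with `J` the rotation by a right angle, has no real eigenvalue,
so `c ↦ ‖(c - T)⁻¹ a‖` is continuous on `[0, ∞)`, and it equals `‖T⁻¹ a‖ < 1` at `c = 0`.
At `c = t cos θ` the equation `(c - T) y = T u` with `u = T⁻¹ a` becomes
`-sin θ · J A⁻¹ y = B A⁻¹ u`; since `J` and `B` are isometries, `|sin θ| ‖A⁻¹ y‖ = ‖A⁻¹ u‖`, and
the bound on `|sin θ|` forces `‖y‖ ≥ 1`. The intermediate value theorem supplies `c`.
-/

/-- The "affine" map `x ↦ (a + T(x))/‖a + T(x)‖` induced on the unit sphere. -/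
noncomputable def affAct {m : ℕ} (A : Matrix (Fin m) (Fin m) ℝ)
    (a x : EuclideanSpace ℝ (Fin m)) : EuclideanSpace ℝ (Fin m) :=
  ‖a + Matrix.toEuclideanLin A x‖⁻¹ • (a + Matrix.toEuclideanLin A x)

open Set

section Resolvent

variable {𝕜 E : Type*} [NontriviallyNormedField 𝕜] [NormedAddCommGroup E] [NormedSpace 𝕜 E]

lemma algebraMap_sub_apply_resolvent_apply {T : E →L[𝕜] E} {c : 𝕜}
    (hc : c ∈ resolventSet 𝕜 T) (x : E) :
    (algebraMap 𝕜 (E →L[𝕜] E) c - T) (resolvent T c x) = x := by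
  rw [← mul_apply_eq_comp, resolvent, Ring.mul_inverse_cancel _ hc, one_apply_eq_self]

lemma resolvent_apply_eq_of_apply_eq {T : E →L[𝕜] E} {c : 𝕜} (hc : c ∈ resolventSet 𝕜 T)
    {x y : E} (h : (algebraMap 𝕜 (E →L[𝕜] E) c - T) y = x) : resolvent T c x = y := by
  rw [← h, ← mul_apply_eq_comp, resolvent, Ring.inverse_mul_cancel _ hc, one_apply_eq_self]

end Resolvent

theorem exists_pos_norm_eq_one_add_apply_eq_smul {E : Type*} [NormedAddCommGroup E]
    [NormedSpace ℝ E] [CompleteSpace E] {T : E →L[ℝ] E} {a : E} {c₀ : ℝ} (hc₀ : 0 ≤ c₀)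
    (hρ : Icc 0 c₀ ⊆ resolventSet ℝ T) (h0 : ‖resolvent T (0 : ℝ) a‖ < 1)
    (h1 : 1 ≤ ‖resolvent T c₀ a‖) :
    ∃ c : ℝ, 0 < c ∧ ∃ x : E, ‖x‖ = 1 ∧ a + T x = c • x := by
  have hcont : ContinuousOn (fun c => ‖resolvent T c a‖) (Icc 0 c₀) := fun c hc =>
    ((spectrum.hasDerivAt_resolvent_const_left (hρ hc)).continuousAt.clm_apply
      continuousAt_const).norm.continuousWithinAt
  obtain ⟨c, hc, hnorm⟩ := intermediate_value_Icc hc₀ hcont ⟨h0.le, h1⟩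
  have hc_pos : 0 < c := hc.1.lt_of_ne <| by rintro rfl; exact h0.ne hnorm
  refine ⟨c, hc_pos, resolvent T c a, hnorm, ?_⟩
  have h := algebraMap_sub_apply_resolvent_apply (hρ hc) a
  rw [Algebra.algebraMap_eq_smul_one, sub_apply, smul_apply, one_apply_eq_self] at h
  exact (sub_eq_iff_eq_add.mp h).symm

lemma algebraMap_sub_units_conj {R A : Type*} [CommSemiring R] [Ring A] [Algebra R A] (u : Aˣ)
    (c : R) (x : A) : algebraMap R A c - u * x * ↑u⁻¹ = u * (algebraMap R A c - x) * ↑u⁻¹ := by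
  simp [mul_sub, sub_mul, Algebra.commutes, mul_assoc]

open Matrix

lemma affAct_eq_self_of_add_eq_smul {m : ℕ} {M : Matrix (Fin m) (Fin m) ℝ}
    {a x : EuclideanSpace ℝ (Fin m)} {c : ℝ} (hc : 0 < c) (hx : ‖x‖ = 1)
    (h : a + toEuclideanLin M x = c • x) : affAct M a x = x := by
  rw [affAct, h, norm_smul, hx, mul_one, Real.norm_of_nonneg hc.le, inv_smul_smul₀ hc.ne']

lemma affAct_algebraMap_inv_norm_smul_self {m : ℕ} {t : ℝ} (ht : 0 ≤ t)
    {a : EuclideanSpace ℝ (Fin m)} (ha : a ≠ 0) :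
    affAct (algebraMap ℝ _ t) a (‖a‖⁻¹ • a) = ‖a‖⁻¹ • a := by
  have ha' : 0 < ‖a‖ := norm_pos_iff.2 ha
  refine affAct_eq_self_of_add_eq_smul (c := ‖a‖ + t) (by positivity) (norm_smul_inv_norm ha) ?_
  simp only [Algebra.algebraMap_eq_smul_one, map_smul, toLpLin_one, LinearMap.smul_apply,
    LinearMap.id_coe, id_eq]
  rw [add_smul, smul_inv_smul₀ ha'.ne', smul_comm]

lemma toEuclideanCLM_units_apply_inv_apply {n : Type*} [Fintype n] [DecidableEq n]
    (A : (Matrix n n ℝ)ˣ) (x : EuclideanSpace ℝ n) :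
    toEuclideanCLM (𝕜 := ℝ) ↑A (toEuclideanCLM (𝕜 := ℝ) ↑A⁻¹ x) = x := by
  rw [← mul_apply_eq_comp, ← map_mul, Units.mul_inv, map_one, one_apply_eq_self]

lemma toEuclideanCLM_units_inv_apply_apply {n : Type*} [Fintype n] [DecidableEq n]
    (A : (Matrix n n ℝ)ˣ) (x : EuclideanSpace ℝ n) :
    toEuclideanCLM (𝕜 := ℝ) ↑A⁻¹ (toEuclideanCLM (𝕜 := ℝ) ↑A x) = x := by
  rw [← mul_apply_eq_comp, ← map_mul, Units.inv_mul, map_one, one_apply_eq_self]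

section Plane

local notation "M₂" => Matrix (Fin 2) (Fin 2) ℝ
local notation "Φ" => toEuclideanCLM (𝕜 := ℝ) (n := Fin 2)

-- Multiplication by `a + b i` on `ℂ ≅ ℝ²`; the rotation `B` is `conformalMatrix (cos θ) (sin θ)`.
def conformalMatrix (a b : ℝ) : M₂ := !![a, -b; b, a]

lemma smul_conformalMatrix (t a b : ℝ) :
    t • conformalMatrix a b = conformalMatrix (t * a) (t * b) := by
  ext i j; fin_cases i <;> fin_cases j <;> simp [conformalMatrix]

lemma conformalMatrix_zero_right (a : ℝ) : conformalMatrix a 0 = algebraMap ℝ M₂ a := by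
  ext i j; fin_cases i <;> fin_cases j <;> simp [conformalMatrix, Algebra.algebraMap_eq_smul_one]

lemma algebraMap_sub_conformalMatrix (c a b : ℝ) :
    algebraMap ℝ M₂ c - conformalMatrix a b = conformalMatrix (c - a) (-b) := by
  ext i j; fin_cases i <;> fin_cases j <;> simp [conformalMatrix, Algebra.algebraMap_eq_smul_one]

lemma spectrum_conformalMatrix {b : ℝ} (hb : b ≠ 0) (a : ℝ) :
    spectrum ℝ (conformalMatrix a b) = ∅ := by
  refine eq_empty_of_forall_notMem fun c => ?_
  rw [spectrum.notMem_iff, algebraMap_sub_conformalMatrix, isUnit_iff_isUnit_det,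
    isUnit_iff_ne_zero, conformalMatrix, det_fin_two_of]
  apply ne_of_gt
  nlinarith [sq_nonneg (c - a), sq_pos_of_ne_zero hb]

lemma mem_resolventSet_toEuclideanCLM_conj_conformalMatrix (A : GL (Fin 2) ℝ) (a : ℝ) {b : ℝ}
    (hb : b ≠ 0) (c : ℝ) :
    c ∈ resolventSet ℝ (Φ ((A : M₂) * conformalMatrix a b * (↑A⁻¹ : M₂))) := by
  have hspec : spectrum ℝ (Φ ((A : M₂) * conformalMatrix a b * (↑A⁻¹ : M₂))) = ∅ := by
    rw [AlgEquiv.spectrum_eq, spectrum.units_conjugate, spectrum_conformalMatrix hb]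
  exact spectrum.mem_resolventSet_iff.mpr (spectrum.notMem_iff.mp (hspec ▸ notMem_empty c))

lemma norm_toEuclideanCLM_conformalMatrix_apply (a b : ℝ) (v : EuclideanSpace ℝ (Fin 2)) :
    ‖Φ (conformalMatrix a b) v‖ = √(a ^ 2 + b ^ 2) * ‖v‖ := by
  rw [← Real.sqrt_sq (norm_nonneg _), ← Real.sqrt_sq (norm_nonneg v),
    ← Real.sqrt_mul (by positivity)]
  congr 1
  simp [EuclideanSpace.real_norm_sq_eq, conformalMatrix, Fin.sum_univ_two, mulVec, dotProduct]
  ring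

lemma abs_mul_norm_eq_of_algebraMap_sub_conj_conformalMatrix (A : GL (Fin 2) ℝ) (p q : ℝ)
    {u y : EuclideanSpace ℝ (Fin 2)}
    (h : (algebraMap ℝ _ p - Φ ((A : M₂) * conformalMatrix p q * (↑A⁻¹ : M₂))) y =
      Φ ((A : M₂) * conformalMatrix p q * (↑A⁻¹ : M₂)) u) :
    |q| * ‖Φ ↑A⁻¹ y‖ = √(p ^ 2 + q ^ 2) * ‖Φ ↑A⁻¹ u‖ := by
  rw [← AlgHomClass.commutes Φ, ← map_sub, algebraMap_sub_units_conj,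
    algebraMap_sub_conformalMatrix, sub_self] at h
  simp only [map_mul, mul_apply_eq_comp] at h
  have h' := congrArg (Φ ↑A⁻¹) h
  rw [toEuclideanCLM_units_inv_apply_apply, toEuclideanCLM_units_inv_apply_apply] at h'
  rw [← norm_toEuclideanCLM_conformalMatrix_apply, ← h', norm_toEuclideanCLM_conformalMatrix_apply]
  simp [Real.sqrt_sq_eq_abs]

lemma one_le_norm_of_algebraMap_sub_conj_conformalMatrix_apply_eq (A : GL (Fin 2) ℝ) {t θ : ℝ}
    (ht : 0 < t) (hs : Real.sin θ ≠ 0) {u y : EuclideanSpace ℝ (Fin 2)}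
    (hsin : |Real.sin θ| ≤ ‖u‖ / (‖Φ A‖ * ‖Φ ↑A⁻¹‖))
    (h : (algebraMap ℝ _ (t * Real.cos θ) -
        Φ ((A : M₂) * conformalMatrix (t * Real.cos θ) (t * Real.sin θ) * (↑A⁻¹ : M₂))) y =
      Φ ((A : M₂) * conformalMatrix (t * Real.cos θ) (t * Real.sin θ) * (↑A⁻¹ : M₂)) u) :
    1 ≤ ‖y‖ := by
  set α := ‖Φ A‖
  set β := ‖Φ ↑A⁻¹‖
  set v := Φ ↑A⁻¹ y
  set w := Φ ↑A⁻¹ u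
  have hαβ : 0 < α * β := by
    refine (mul_nonneg (norm_nonneg _) (norm_nonneg _)).lt_of_ne fun h0 => hs ?_
    rwa [← h0, div_zero, abs_nonpos_iff] at hsin
  have hvw : |Real.sin θ| * ‖v‖ = ‖w‖ := by
    have key := abs_mul_norm_eq_of_algebraMap_sub_conj_conformalMatrix A _ _ h
    rw [mul_pow, mul_pow, ← mul_add, Real.cos_sq_add_sin_sq, mul_one, Real.sqrt_sq ht.le,
      abs_mul, abs_of_pos ht, mul_assoc] at key
    exact mul_left_cancel₀ ht.ne' key
  have hu : ‖u‖ ≤ α * ‖w‖ := by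
    conv_lhs => rw [← toEuclideanCLM_units_apply_inv_apply A u]
    exact ContinuousLinearMap.le_opNorm _ _
  have hv : ‖v‖ ≤ β * ‖y‖ := ContinuousLinearMap.le_opNorm _ _
  rw [le_div_iff₀ hαβ] at hsin
  refine le_of_mul_le_mul_left ?_ (mul_pos (abs_pos.2 hs) hαβ)
  calc |Real.sin θ| * (α * β) * 1 ≤ ‖u‖ := by rwa [mul_one]
    _ ≤ α * (|Real.sin θ| * ‖v‖) := by rwa [hvw]
    _ ≤ α * (|Real.sin θ| * (β * ‖y‖)) := by gcongr
    _ = |Real.sin θ| * (α * β) * ‖y‖ := by ring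

theorem stmt16 (T A : GL (Fin 2) ℝ) (t θ : ℝ) (ht : 0 < t) (hcos : 0 < Real.cos θ)
    (hT : (T : Matrix (Fin 2) (Fin 2) ℝ) =
      t • ((A : Matrix (Fin 2) (Fin 2) ℝ) *
           !![Real.cos θ, -Real.sin θ; Real.sin θ, Real.cos θ] *
           ((A⁻¹ : GL (Fin 2) ℝ) : Matrix (Fin 2) (Fin 2) ℝ)))
    (a : EuclideanSpace ℝ (Fin 2)) (ha : a ≠ 0)
    (hlt : ‖Matrix.toEuclideanLin ((T⁻¹ : GL (Fin 2) ℝ) : Matrix (Fin 2) (Fin 2) ℝ) a‖ < 1)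
    (hsin : |Real.sin θ| ≤
      ‖Matrix.toEuclideanLin ((T⁻¹ : GL (Fin 2) ℝ) : Matrix (Fin 2) (Fin 2) ℝ) a‖ /
        (‖Matrix.toEuclideanCLM (𝕜 := ℝ) (A : Matrix (Fin 2) (Fin 2) ℝ)‖ *
         ‖Matrix.toEuclideanCLM (𝕜 := ℝ) ((A⁻¹ : GL (Fin 2) ℝ) : Matrix (Fin 2) (Fin 2) ℝ)‖)) :
    ∃ x : EuclideanSpace ℝ (Fin 2), ‖x‖ = 1 ∧
      affAct (T : Matrix (Fin 2) (Fin 2) ℝ) a x = x := by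
  have hTC : (T : M₂) =
      (A : M₂) * conformalMatrix (t * Real.cos θ) (t * Real.sin θ) * (↑A⁻¹ : M₂) := by
    rw [hT, ← smul_conformalMatrix, Matrix.mul_smul, Matrix.smul_mul]; rfl
  rcases eq_or_ne (Real.sin θ) 0 with hs | hs
  · have hcos1 : Real.cos θ = 1 := by nlinarith [Real.sin_sq_add_cos_sq θ]
    rw [hs, hcos1, mul_zero, mul_one, conformalMatrix_zero_right, ← Algebra.commutes, mul_assoc,
      Units.mul_inv, mul_one] at hTC
    exact ⟨_, norm_smul_inv_norm ha, hTC ▸ affAct_algebraMap_inv_norm_smul_self ht.le ha⟩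
  have hρ (c : ℝ) : c ∈ resolventSet ℝ (Φ T) :=
    hTC ▸ mem_resolventSet_toEuclideanCLM_conj_conformalMatrix A _ (mul_ne_zero ht.ne' hs) c
  have h0 : ‖resolvent (Φ T) (0 : ℝ) a‖ < 1 := by
    rwa [resolvent_apply_eq_of_apply_eq (hρ 0) (y := -Φ ↑T⁻¹ a), norm_neg]
    rw [map_zero, zero_sub, _root_.neg_apply, map_neg, neg_neg,
      toEuclideanCLM_units_apply_inv_apply]
  have h1 : 1 ≤ ‖resolvent (Φ T) (t * Real.cos θ) a‖ := by
    refine one_le_norm_of_algebraMap_sub_conj_conformalMatrix_apply_eq A ht hs hsin ?_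
    rw [← hTC, algebraMap_sub_apply_resolvent_apply (hρ _)]
    exact (toEuclideanCLM_units_apply_inv_apply T a).symm
  obtain ⟨c, hc, x, hx, hfix⟩ :=
    exists_pos_norm_eq_one_add_apply_eq_smul (mul_pos ht hcos).le (fun c _ => hρ c) h0 h1
  exact ⟨x, hx, affAct_eq_self_of_add_eq_smul hc hx hfix⟩

end Plane
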